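/- arXiv:2211.04556 — 3 statements merged into one kernel-verified Lean document; each statement's English description precedes it below -/
import Mathlib

section
/- Let (A k)_{k ∈ ℤ} be a family of complex Hilbert spaces and for each k let d k : A k →L[ℂ] A (k+1) and e k : A k →L[ℂ] A (k+1) be bounded linear operators. Assume the adjoint commutation relations (d k)† ∘ e k = e (k−1) ∘ (d (k−1))† and (e k)† ∘ d k = d (k−1) ∘ (e (k−1))† hold for all k. Define D k := d k + (−1)^k • e k. Then for every k, (D k)† ∘ (D k) + (D (k−1)) ∘ (D (k−1))† = [(d k)† ∘ d k + d (k−1) ∘ (d (k−1))†] + [(e k)† ∘ e k + e (k−1) ∘ (e (k−1))†], i.e. the total Hodge-Laplacian is the sum of the Hodge-Laplacians of d and of e. -/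
/-! Expanding `Δ_D`, the sign `(-1)^k` flips between consecutive degrees, so the mixed terms
`d† e` and `e d†` (and likewise `e† d` and `d e†`) appear with opposite signs and cancel by the
commutation relations, while the pure terms carry `|(-1)^k|² = 1`. -/

open ContinuousLinearMap

section HodgeLaplacian

variable {𝕜 E F G : Type*} [RCLike 𝕜]
  [NormedAddCommGroup E] [InnerProductSpace 𝕜 E] [CompleteSpace E]
  [NormedAddCommGroup F] [InnerProductSpace 𝕜 F] [CompleteSpace F]
  [NormedAddCommGroup G] [InnerProductSpace 𝕜 G] [CompleteSpace G]

noncomputable def hodgeLaplacian (dIn : E →L[𝕜] F) (dOut : F →L[𝕜] G) : F →L[𝕜] F :=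
  (adjoint dOut).comp dOut + dIn.comp (adjoint dIn)

theorem hodgeLaplacian_add_smul_sub_smul (d₀ e₀ : E →L[𝕜] F) (d₁ e₁ : F →L[𝕜] G) (c : 𝕜)
    (hde : (adjoint d₁).comp e₁ = e₀.comp (adjoint d₀))
    (hed : (adjoint e₁).comp d₁ = d₀.comp (adjoint e₀)) :
    hodgeLaplacian (d₀ + c • e₀) (d₁ - c • e₁) =
      hodgeLaplacian d₀ d₁ + (‖c‖ : 𝕜) ^ 2 • hodgeLaplacian e₀ e₁ := by
  simp only [hodgeLaplacian, map_add, map_sub, map_smulₛₗ, add_comp, sub_comp, comp_add,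
    comp_sub, smul_comp, comp_smul, smul_smul, hde, hed, RCLike.conj_mul, RCLike.mul_conj,
    smul_add, smul_sub]
  abel

end HodgeLaplacian

/-- When the coupling terms vanish (the adjoint commutation relations
`d† ∘ e = e ∘ d†` and `e† ∘ d = d ∘ e†` hold), the Hodge-Laplacian of the total
differential `D k = d k + (−1)^k • e k` is the sum of the Hodge-Laplacians of `d` and `e`
(stated at degree `k + 1`, for all `k : ℤ`, to avoid index casts). -/
theorem total_hodge_laplacian_sum
    {A : ℤ → Type*} [∀ k, NormedAddCommGroup (A k)] [∀ k, InnerProductSpace ℂ (A k)]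
    [∀ k, CompleteSpace (A k)]
    (d e : ∀ k : ℤ, A k →L[ℂ] A (k + 1))
    (hde : ∀ k : ℤ, (adjoint (d (k + 1))).comp (e (k + 1)) = (e k).comp (adjoint (d k)))
    (hed : ∀ k : ℤ, (adjoint (e (k + 1))).comp (d (k + 1)) = (d k).comp (adjoint (e k)))
    (D : ∀ k : ℤ, A k →L[ℂ] A (k + 1))
    (hD : ∀ k : ℤ, D k = d k + ((-1 : ℂ) ^ k) • e k) :
    ∀ k : ℤ,
      (adjoint (D (k + 1))).comp (D (k + 1)) + (D k).comp (adjoint (D k)) =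
        ((adjoint (d (k + 1))).comp (d (k + 1)) + (d k).comp (adjoint (d k)))
        + ((adjoint (e (k + 1))).comp (e (k + 1)) + (e k).comp (adjoint (e k))) := by
  intro k
  have hsign : (-1 : ℂ) ^ (k + 1) = -(-1) ^ k := by
    rw [zpow_add_one₀ (by norm_num)]; ring
  have hnorm : ‖(-1 : ℂ) ^ k‖ = 1 := by simp
  have key := hodgeLaplacian_add_smul_sub_smul (d k) (e k) (d (k + 1)) (e (k + 1)) ((-1) ^ k)
    (hde k) (hed k)
  rw [hnorm, RCLike.ofReal_one, one_pow, one_smul] at key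
  rw [hD, hD, hsign, neg_smul, ← sub_eq_add_neg]
  exact key
end

section
/- Let E, F, G be complex Hilbert spaces and T₁ : E →L[ℂ] F, T₂ : F →L[ℂ] G bounded linear operators with T₂ ∘ T₁ = 0. Assume the range of T₁ and the range of T₂† (the adjoint of T₂) are closed in F. Then the three closed subspaces range T₁, H := ker T₂ ⊓ ker T₁†, and range T₂† of F are pairwise orthogonal, and their sum is all of F: F = range T₁ ⊕ (ker T₂ ⊓ ker T₁†) ⊕ range T₂† as an internal orthogonal direct sum. -/
open ContinuousLinearMap Submodule
open scoped InnerProductSpace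

/-- Hodge decomposition for a bounded Hilbert complex with closed ranges:
`F = range T₁ ⊕ (ker T₂ ⊓ ker T₁†) ⊕ range T₂†`, an internal orthogonal direct sum. -/
theorem hodge_decomposition
    {E F G : Type*} [NormedAddCommGroup E] [InnerProductSpace ℂ E]
    [NormedAddCommGroup F] [InnerProductSpace ℂ F]
    [NormedAddCommGroup G] [InnerProductSpace ℂ G]
    [CompleteSpace E] [CompleteSpace F] [CompleteSpace G]
    (T₁ : E →L[ℂ] F) (T₂ : F →L[ℂ] G)
    (h : T₂.comp T₁ = 0)
    (hr₁ : IsClosed ((LinearMap.range (T₁ : E →ₗ[ℂ] F) : Submodule ℂ F) : Set F))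
    (hr₂ : IsClosed ((LinearMap.range (adjoint T₂ : G →ₗ[ℂ] F) : Submodule ℂ F) : Set F)) :
    (LinearMap.range (T₁ : E →ₗ[ℂ] F) ⟂ (LinearMap.ker (T₂ : F →ₗ[ℂ] G) ⊓ LinearMap.ker (adjoint T₁ : F →ₗ[ℂ] E))) ∧
    (LinearMap.range (T₁ : E →ₗ[ℂ] F) ⟂ LinearMap.range (adjoint T₂ : G →ₗ[ℂ] F)) ∧
    ((LinearMap.ker (T₂ : F →ₗ[ℂ] G) ⊓ LinearMap.ker (adjoint T₁ : F →ₗ[ℂ] E)) ⟂ LinearMap.range (adjoint T₂ : G →ₗ[ℂ] F)) ∧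
    (LinearMap.range (T₁ : E →ₗ[ℂ] F) ⊔ (LinearMap.ker (T₂ : F →ₗ[ℂ] G) ⊓ LinearMap.ker (adjoint T₁ : F →ₗ[ℂ] E))
      ⊔ LinearMap.range (adjoint T₂ : G →ₗ[ℂ] F) = ⊤) := by
  have hT₁kerT₂ : LinearMap.range (T₁ : E →ₗ[ℂ] F) ≤ LinearMap.ker (T₂ : F →ₗ[ℂ] G) := by
    rintro _ ⟨x, rfl⟩
    simpa [LinearMap.mem_ker] using congrArg (fun f => f x) h
  have ho1 : LinearMap.range (T₁ : E →ₗ[ℂ] F) ⟂ (LinearMap.ker (T₂ : F →ₗ[ℂ] G) ⊓ LinearMap.ker (adjoint T₁ : F →ₗ[ℂ] E)) := by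
    rintro _ ⟨x, rfl⟩ y hy
    have hy' : adjoint T₁ y = 0 := hy.2
    simp only [coe_coe]
    rw [← adjoint_inner_left, hy', inner_zero_left]
  have ho2 : LinearMap.range (T₁ : E →ₗ[ℂ] F) ⟂ LinearMap.range (adjoint T₂ : G →ₗ[ℂ] F) := by
    rintro _ ⟨x, rfl⟩ _ ⟨y, rfl⟩
    simp only [coe_coe]
    rw [adjoint_inner_left]
    have : T₂ (T₁ x) = 0 := hT₁kerT₂ ⟨x, rfl⟩
    rw [this, inner_zero_right]
  have ho3 : (LinearMap.ker (T₂ : F →ₗ[ℂ] G) ⊓ LinearMap.ker (adjoint T₁ : F →ₗ[ℂ] E)) ⟂ LinearMap.range (adjoint T₂ : G →ₗ[ℂ] F) := by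
    rintro x hx _ ⟨y, rfl⟩
    simp only [coe_coe]
    rw [adjoint_inner_left, show T₂ x = 0 from hx.1, inner_zero_right]
  refine ⟨ho1, ho2, ho3, ?_⟩
  haveI : CompleteSpace (LinearMap.range (T₁ : E →ₗ[ℂ] F) : Submodule ℂ F) := hr₁.completeSpace_coe
  haveI : CompleteSpace (LinearMap.range (adjoint T₂ : G →ₗ[ℂ] F) : Submodule ℂ F) := hr₂.completeSpace_coe
  -- (range T₁)ᗮ = ker (adjoint T₁)
  have hker1 : (LinearMap.range (T₁ : E →ₗ[ℂ] F))ᗮ = LinearMap.ker (adjoint T₁ : F →ₗ[ℂ] E) := by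
    ext y
    simp only [Submodule.mem_orthogonal, LinearMap.mem_ker]
    constructor
    · intro hy
      have h0 : ⟪adjoint T₁ y, adjoint T₁ y⟫_ℂ = 0 := by
        rw [adjoint_inner_right]
        exact hy _ ⟨adjoint T₁ y, rfl⟩
      exact inner_self_eq_zero.mp h0
    · rintro hy _ ⟨x, rfl⟩
      simp only [coe_coe] at hy ⊢
      rw [← adjoint_inner_right, hy, inner_zero_right]
  -- (range (adjoint T₂))ᗮ = ker T₂
  have hker2 : (LinearMap.range (adjoint T₂ : G →ₗ[ℂ] F))ᗮ = LinearMap.ker (T₂ : F →ₗ[ℂ] G) := by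
    ext y
    simp only [Submodule.mem_orthogonal, LinearMap.mem_ker]
    constructor
    · intro hy
      have h0 : ⟪T₂ y, T₂ y⟫_ℂ = 0 := by
        rw [← adjoint_inner_left]
        exact hy _ ⟨T₂ y, rfl⟩
      exact inner_self_eq_zero.mp h0
    · rintro hy _ ⟨g, rfl⟩
      simp only [coe_coe] at hy ⊢
      rw [adjoint_inner_left, hy, inner_zero_right]
  have htop1 : LinearMap.range (T₁ : E →ₗ[ℂ] F) ⊔ LinearMap.ker (adjoint T₁ : F →ₗ[ℂ] E) = ⊤ := by
    rw [← hker1]; exact Submodule.sup_orthogonal_of_hasOrthogonalProjection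
  have htop2 : LinearMap.range (adjoint T₂ : G →ₗ[ℂ] F) ⊔ LinearMap.ker (T₂ : F →ₗ[ℂ] G) = ⊤ := by
    rw [← hker2]; exact Submodule.sup_orthogonal_of_hasOrthogonalProjection
  have hmod : LinearMap.range (T₁ : E →ₗ[ℂ] F) ⊔ (LinearMap.ker (T₂ : F →ₗ[ℂ] G) ⊓ LinearMap.ker (adjoint T₁ : F →ₗ[ℂ] E))
      = LinearMap.ker (T₂ : F →ₗ[ℂ] G) := by
    rw [inf_comm, ← sup_inf_assoc_of_le _ hT₁kerT₂, htop1, top_inf_eq]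
  rw [hmod, sup_comm, htop2]
end

section
/- Let E, F, G be complex Hilbert spaces and T₁ : E →L[ℂ] F, T₂ : F →L[ℂ] G bounded linear operators with T₂ ∘ T₁ = 0, and assume range T₁ and range T₂† are closed in F. Define Δ := T₁ ∘ T₁† + T₂† ∘ T₂ : F →L[ℂ] F, where † denotes the Hilbert-space adjoint. Then for every φ ∈ F orthogonal to ker Δ, there exists a unique α ∈ F such that Δ α = φ and α is orthogonal to ker Δ. -/
open ContinuousLinearMap

local notation "⟪" x ", " y "⟫" => @inner ℂ _ _ x y

lemma aux_bdd_below {E F : Type*} [NormedAddCommGroup E] [InnerProductSpace ℂ E]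
    [NormedAddCommGroup F] [InnerProductSpace ℂ F]
    [CompleteSpace E] [CompleteSpace F] (T : E →L[ℂ] F)
    (hr : IsClosed ((LinearMap.range (T : E →ₗ[ℂ] F) : Submodule ℂ F) : Set F)) :
    ∃ c > 0, ∀ w ∈ LinearMap.range (T : E →ₗ[ℂ] F), c * ‖w‖ ≤ ‖adjoint T w‖ := by
  haveI : CompleteSpace (LinearMap.range (T : E →ₗ[ℂ] F) : Submodule ℂ F) := hr.completeSpace_coe
  set R : Submodule ℂ F := LinearMap.range (T : E →ₗ[ℂ] F)
  have hmem : ∀ x, T x ∈ R := fun x => LinearMap.mem_range_self _ x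
  set T' : E →L[ℂ] R := T.codRestrict R hmem
  have hsurj : Function.Surjective T' := by
    rintro ⟨w, hw⟩
    obtain ⟨x, hx⟩ := hw
    exact ⟨x, Subtype.ext hx⟩
  obtain ⟨C, Cpos, hC⟩ := T'.exists_preimage_norm_le hsurj
  refine ⟨C⁻¹, by positivity, ?_⟩
  intro w hw
  obtain ⟨x, hx, hxn⟩ := hC ⟨w, hw⟩
  have hTx : T x = w := congrArg Subtype.val hx
  have hnw : ‖(⟨w, hw⟩ : R)‖ = ‖w‖ := rfl
  rw [hnw] at hxn
  have key : ‖w‖ ^ 2 ≤ (C * ‖w‖) * ‖adjoint T w‖ := by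
    have h1 : ‖w‖ ^ 2 = RCLike.re ⟪w, w⟫ := (inner_self_eq_norm_sq (𝕜 := ℂ) w).symm
    have h2 : ⟪w, w⟫ = ⟪x, adjoint T w⟫ := by
      rw [← hTx, adjoint_inner_right]
    have h3 : RCLike.re ⟪x, adjoint T w⟫ ≤ ‖x‖ * ‖adjoint T w‖ := re_inner_le_norm _ _
    have h4 : ‖x‖ * ‖adjoint T w‖ ≤ (C * ‖w‖) * ‖adjoint T w‖ :=
      mul_le_mul_of_nonneg_right hxn (norm_nonneg _)
    rw [h1, h2]; exact h3.trans h4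
  rcases eq_or_lt_of_le (norm_nonneg w) with h0 | h0
  · simp [← h0]
  · rw [inv_mul_le_iff₀ Cpos.lt]
    nlinarith [norm_nonneg (adjoint T w)]


/-- Well-posedness of the Hodge-Laplace problem for a bounded Hilbert complex with closed
ranges: for every `φ` orthogonal to `ker Δ` there is a unique `α` with `Δ α = φ` and
`α` orthogonal to `ker Δ`. -/
theorem hodge_laplace_well_posed
    {E F G : Type*} [NormedAddCommGroup E] [InnerProductSpace ℂ E]
    [NormedAddCommGroup F] [InnerProductSpace ℂ F]
    [NormedAddCommGroup G] [InnerProductSpace ℂ G]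
    [CompleteSpace E] [CompleteSpace F] [CompleteSpace G]
    (T₁ : E →L[ℂ] F) (T₂ : F →L[ℂ] G)
    (h : T₂.comp T₁ = 0)
    (hr₁ : IsClosed ((LinearMap.range (T₁ : E →ₗ[ℂ] F) : Submodule ℂ F) : Set F))
    (hr₂ : IsClosed ((LinearMap.range ((adjoint T₂ : G →L[ℂ] F) : G →ₗ[ℂ] F) : Submodule ℂ F) : Set F))
    (Δ : F →L[ℂ] F)
    (hΔ : Δ = T₁.comp (adjoint T₁) + (adjoint T₂).comp T₂) :
    ∀ φ ∈ (LinearMap.ker (Δ : F →ₗ[ℂ] F))ᗮ, ∃! α : F, Δ α = φ ∧ α ∈ (LinearMap.ker (Δ : F →ₗ[ℂ] F))ᗮ := by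
  set A₁ : F →L[ℂ] E := adjoint T₁ with hA₁
  set A₂ : G →L[ℂ] F := adjoint T₂ with hA₂
  set K : Submodule ℂ F := (LinearMap.ker (Δ : F →ₗ[ℂ] F))ᗮ with hK
  set R₁ : Submodule ℂ F := LinearMap.range (T₁ : E →ₗ[ℂ] F) with hR₁
  set R₂ : Submodule ℂ F := LinearMap.range (A₂ : G →ₗ[ℂ] F) with hR₂
  -- adjoint of the complex relation
  have hTT : ∀ u, T₂ (T₁ u) = 0 := fun u => congrFun (congrArg DFunLike.coe h) u
  have horth : ∀ (u : E) (v : G), ⟪T₁ u, A₂ v⟫ = 0 := by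
    intro u v
    rw [hA₂, adjoint_inner_right, hTT u, inner_zero_left]
  have h0' : ∀ v, A₁ (A₂ v) = 0 := by
    intro v
    apply (inner_self_eq_zero (𝕜 := ℂ)).mp
    have e1 : ⟪A₁ (A₂ v), A₁ (A₂ v)⟫ = ⟪A₂ v, T₁ (A₁ (A₂ v))⟫ := by
      rw [hA₁, adjoint_inner_left]
    rw [e1, ← inner_conj_symm, horth, map_zero]
  -- self-adjointness
  have hadj : adjoint Δ = Δ := by
    rw [hΔ, map_add, adjoint_comp, adjoint_comp, adjoint_adjoint, adjoint_adjoint]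
  have hsa : ∀ x y : F, ⟪Δ x, y⟫ = ⟪x, Δ y⟫ := by
    intro x y
    conv_rhs => rw [← hadj]
    rw [adjoint_inner_right]
  -- quadratic form
  have hquad : ∀ x : F, ⟪Δ x, x⟫ = ((‖A₁ x‖ : ℂ) ^ 2 + (‖T₂ x‖ : ℂ) ^ 2) := by
    intro x
    rw [hΔ]
    simp only [add_apply, comp_apply, inner_add_left]
    have e1 : ⟪T₁ (A₁ x), x⟫ = ⟪A₁ x, A₁ x⟫ := by
      conv_lhs => rw [show T₁ = adjoint A₁ by rw [hA₁, adjoint_adjoint]]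
      rw [adjoint_inner_left]
    have e2 : ⟪A₂ (T₂ x), x⟫ = ⟪T₂ x, T₂ x⟫ := by
      rw [hA₂, adjoint_inner_left]
    rw [e1, e2, inner_self_eq_norm_sq_to_K, inner_self_eq_norm_sq_to_K]
    norm_num
  have hker0 : ∀ x : F, ⟪Δ x, x⟫ = 0 → (A₁ x = 0 ∧ T₂ x = 0) := by
    intro x hx
    have h0 : ((‖A₁ x‖ : ℂ) ^ 2 + (‖T₂ x‖ : ℂ) ^ 2) = 0 := by
      rw [← hquad x, hx]
    have h0r : (‖A₁ x‖ : ℝ) ^ 2 + (‖T₂ x‖ : ℝ) ^ 2 = 0 := by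
      rw [← Complex.ofReal_pow, ← Complex.ofReal_pow, ← Complex.ofReal_add] at h0
      exact_mod_cast h0
    obtain ⟨ha, hb⟩ := (add_eq_zero_iff_of_nonneg (sq_nonneg _) (sq_nonneg _)).mp h0r
    exact ⟨norm_eq_zero.mp (pow_eq_zero_iff two_ne_zero |>.mp ha),
      norm_eq_zero.mp (pow_eq_zero_iff two_ne_zero |>.mp hb)⟩
  have hker : ∀ x : F, Δ x = 0 ↔ (A₁ x = 0 ∧ T₂ x = 0) := by
    intro x
    constructor
    · intro hx
      exact hker0 x (by rw [hx, inner_zero_left])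
    · rintro ⟨h1, h2⟩
      rw [hΔ]; simp [h1, h2]
  -- ranges are contained in K
  have hR₁K : R₁ ≤ K := by
    rintro _ ⟨u, rfl⟩
    rw [hK, Submodule.mem_orthogonal]
    intro k hk
    have hk' : A₁ k = 0 := ((hker k).1 hk).1
    have : ⟪T₁ u, k⟫ = 0 := by
      conv_lhs => rw [show T₁ = adjoint A₁ by rw [hA₁, adjoint_adjoint]]
      rw [adjoint_inner_left, hk', inner_zero_right]
    rw [← inner_conj_symm, ContinuousLinearMap.coe_coe, this, map_zero]
  have hR₂K : R₂ ≤ K := by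
    rintro _ ⟨v, rfl⟩
    rw [hK, Submodule.mem_orthogonal]
    intro k hk
    have hk' : T₂ k = 0 := ((hker k).1 hk).2
    rw [hA₂, ContinuousLinearMap.coe_coe, adjoint_inner_right, hk', inner_zero_left]
  -- membership in ker from orthogonality to both ranges
  have hkermem : ∀ r : F, (∀ u ∈ R₁, ⟪u, r⟫ = 0) → (∀ v ∈ R₂, ⟪v, r⟫ = 0) → Δ r = 0 := by
    intro r hr1 hr2
    have hA₁r : A₁ r = 0 := by
      have : ⟪A₁ r, A₁ r⟫ = 0 := by
        have h1 : ⟪T₁ (A₁ r), r⟫ = 0 := hr1 _ ⟨A₁ r, rfl⟩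
        have h2 : ⟪T₁ (A₁ r), r⟫ = ⟪A₁ r, A₁ r⟫ := by
          conv_lhs => rw [show T₁ = adjoint A₁ by rw [hA₁, adjoint_adjoint]]
          rw [adjoint_inner_left]
        rw [← h2, h1]
      exact inner_self_eq_zero.mp this
    have hT₂r : T₂ r = 0 := by
      have : ⟪T₂ r, T₂ r⟫ = 0 := by
        have h1 : ⟪A₂ (T₂ r), r⟫ = 0 := hr2 _ ⟨T₂ r, rfl⟩
        have h2 : ⟪A₂ (T₂ r), r⟫ = ⟪T₂ r, T₂ r⟫ := by
          rw [hA₂, adjoint_inner_left]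
        rw [← h2, h1]
      exact inner_self_eq_zero.mp this
    exact (hker r).2 ⟨hA₁r, hT₂r⟩
  -- ker ∩ K = 0
  have htriv : ∀ r : F, Δ r = 0 → r ∈ K → r = 0 := by
    intro r h1 h2
    rw [hK, Submodule.mem_orthogonal] at h2
    have := h2 r (by simpa [LinearMap.mem_ker] using h1)
    exact inner_self_eq_zero.mp this
  haveI : CompleteSpace R₁ := hr₁.completeSpace_coe
  haveI : CompleteSpace R₂ := hr₂.completeSpace_coe
  -- decomposition of elements of K
  have hdecomp : ∀ φ ∈ K, ∃ w₁ ∈ R₁, ∃ w₂ ∈ R₂, φ = w₁ + w₂ := by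
    intro φ hφ
    set w₁ : F := (R₁.orthogonalProjectionOnto φ : F) with hw₁
    set w₂ : F := (R₂.orthogonalProjectionOnto φ : F) with hw₂
    have hw₁R : w₁ ∈ R₁ := (R₁.orthogonalProjectionOnto φ).2
    have hw₂R : w₂ ∈ R₂ := (R₂.orthogonalProjectionOnto φ).2
    set r : F := φ - w₁ - w₂ with hr
    have hrR₁ : ∀ u ∈ R₁, ⟪u, r⟫ = 0 := by
      intro u hu
      have h1 : φ - w₁ ∈ R₁ᗮ := Submodule.sub_starProjection_mem_orthogonal (K := R₁) φ
      have h2 : ⟪u, φ - w₁⟫ = 0 := (Submodule.mem_orthogonal R₁ _).1 h1 u hu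
      obtain ⟨u', rfl⟩ := hu
      obtain ⟨v', hv'⟩ := hw₂R
      have h3 : ⟪T₁ u', w₂⟫ = 0 := by rw [← hv']; exact horth u' v'
      have : r = (φ - w₁) - w₂ := hr
      rw [this, inner_sub_right, h2, ContinuousLinearMap.coe_coe, h3, sub_zero]
    have hrR₂ : ∀ v ∈ R₂, ⟪v, r⟫ = 0 := by
      intro v hv
      have h1 : φ - w₂ ∈ R₂ᗮ := Submodule.sub_starProjection_mem_orthogonal (K := R₂) φ
      have h2 : ⟪v, φ - w₂⟫ = 0 := (Submodule.mem_orthogonal R₂ _).1 h1 v hv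
      obtain ⟨v', rfl⟩ := hv
      obtain ⟨u', hu'⟩ := hw₁R
      have h3 : ⟪A₂ v', w₁⟫ = 0 := by
        rw [← hu', ← inner_conj_symm, ContinuousLinearMap.coe_coe, horth u' v', map_zero]
      have : r = (φ - w₂) - w₁ := by rw [hr, sub_right_comm]
      rw [this, inner_sub_right, h2, ContinuousLinearMap.coe_coe, h3, sub_zero]
    have hrker : Δ r = 0 := hkermem r hrR₁ hrR₂
    have hrK : r ∈ K := by
      have := K.sub_mem (K.sub_mem hφ (hR₁K hw₁R)) (hR₂K hw₂R)
      exact this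
    have : r = 0 := htriv r hrker hrK
    refine ⟨w₁, hw₁R, w₂, hw₂R, ?_⟩
    have h4 : φ - (w₁ + w₂) = 0 := by rw [← sub_sub]; exact this
    exact sub_eq_zero.mp h4
  -- bounded-below constants from the closed ranges
  obtain ⟨c₁, hc₁, hb₁⟩ := aux_bdd_below T₁ hr₁
  obtain ⟨c₂, hc₂, hb₂'⟩ := aux_bdd_below (adjoint T₂) hr₂
  have hb₂ : ∀ w ∈ R₂, c₂ * ‖w‖ ≤ ‖T₂ w‖ := by
    intro w hw
    have := hb₂' w hw
    rwa [adjoint_adjoint] at this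
  set c : ℝ := min c₁ c₂ with hc
  have hcpos : 0 < c := lt_min hc₁ hc₂
  -- coercivity on K
  have hco : ∀ α ∈ K, c ^ 2 * ‖α‖ ≤ ‖Δ α‖ := by
    intro α hα
    obtain ⟨w₁, hw₁R, w₂, hw₂R, rfl⟩ := hdecomp α hα
    have e₁ : A₁ (w₁ + w₂) = A₁ w₁ := by
      obtain ⟨v, rfl⟩ := hw₂R
      rw [map_add, ContinuousLinearMap.coe_coe, h0' v, add_zero]
    have e₂ : T₂ (w₁ + w₂) = T₂ w₂ := by
      obtain ⟨u, rfl⟩ := hw₁R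
      rw [map_add, ContinuousLinearMap.coe_coe, hTT u, zero_add]
    have hnorm : ‖w₁ + w₂‖ ^ 2 = ‖w₁‖ ^ 2 + ‖w₂‖ ^ 2 := by
      have hz : RCLike.re ⟪w₁, w₂⟫ = 0 := by
        obtain ⟨u, rfl⟩ := hw₁R; obtain ⟨v, rfl⟩ := hw₂R
        rw [ContinuousLinearMap.coe_coe, ContinuousLinearMap.coe_coe, horth u v, map_zero]
      rw [norm_add_sq (𝕜 := ℂ), hz]; ring
    have hq : RCLike.re ⟪Δ (w₁ + w₂), w₁ + w₂⟫ = ‖A₁ w₁‖ ^ 2 + ‖T₂ w₂‖ ^ 2 := by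
      have h5 := hquad (w₁ + w₂)
      rw [e₁, e₂] at h5
      rw [h5]
      rw [← Complex.ofReal_pow, ← Complex.ofReal_pow, ← Complex.ofReal_add]
      exact Complex.ofReal_re _
    have h1 : c₁ * ‖w₁‖ ≤ ‖A₁ w₁‖ := by rw [hA₁]; exact hb₁ w₁ hw₁R
    have h2 : c₂ * ‖w₂‖ ≤ ‖T₂ w₂‖ := hb₂ w₂ hw₂R
    have h3 : RCLike.re ⟪Δ (w₁ + w₂), w₁ + w₂⟫ ≤ ‖Δ (w₁ + w₂)‖ * ‖w₁ + w₂‖ :=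
      re_inner_le_norm _ _
    have k1 : c * ‖w₁‖ ≤ ‖A₁ w₁‖ :=
      le_trans (mul_le_mul_of_nonneg_right (min_le_left _ _) (norm_nonneg _)) h1
    have k2 : c * ‖w₂‖ ≤ ‖T₂ w₂‖ :=
      le_trans (mul_le_mul_of_nonneg_right (min_le_right _ _) (norm_nonneg _)) h2
    have s1 : (c * ‖w₁‖) ^ 2 ≤ ‖A₁ w₁‖ ^ 2 :=
      pow_le_pow_left₀ (mul_nonneg hcpos.le (norm_nonneg _)) k1 2
    have s2 : (c * ‖w₂‖) ^ 2 ≤ ‖T₂ w₂‖ ^ 2 :=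
      pow_le_pow_left₀ (mul_nonneg hcpos.le (norm_nonneg _)) k2 2
    have key : c ^ 2 * ‖w₁ + w₂‖ ^ 2 ≤ ‖Δ (w₁ + w₂)‖ * ‖w₁ + w₂‖ := by
      calc c ^ 2 * ‖w₁ + w₂‖ ^ 2 = (c * ‖w₁‖) ^ 2 + (c * ‖w₂‖) ^ 2 := by
            rw [hnorm]; ring
        _ ≤ ‖A₁ w₁‖ ^ 2 + ‖T₂ w₂‖ ^ 2 := add_le_add s1 s2
        _ = RCLike.re ⟪Δ (w₁ + w₂), w₁ + w₂⟫ := hq.symm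
        _ ≤ ‖Δ (w₁ + w₂)‖ * ‖w₁ + w₂‖ := h3
    rcases eq_or_lt_of_le (norm_nonneg (w₁ + w₂)) with h4 | h4
    · rw [← h4, mul_zero]; positivity
    · have key' : (c ^ 2 * ‖w₁ + w₂‖) * ‖w₁ + w₂‖ ≤ ‖Δ (w₁ + w₂)‖ * ‖w₁ + w₂‖ := by
        calc (c ^ 2 * ‖w₁ + w₂‖) * ‖w₁ + w₂‖ = c ^ 2 * ‖w₁ + w₂‖ ^ 2 := by ring
          _ ≤ _ := key
      exact le_of_mul_le_mul_right key' h4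
  -- the restriction of Δ to K
  have hKclosed : IsClosed (K : Set F) := Submodule.isClosed_orthogonal _
  haveI : CompleteSpace K := hKclosed.completeSpace_coe
  set S : K →L[ℂ] F := Δ.comp K.subtypeL with hS
  have hanti : AntilipschitzWith ⟨(c ^ 2)⁻¹, by positivity⟩ S := by
    apply ContinuousLinearMap.antilipschitz_of_bound
    intro x
    have hx := hco (x : F) x.2
    have hxn : ‖x‖ = ‖(x : F)‖ := rfl
    have hSx : S x = Δ (x : F) := rfl
    rw [hxn, hSx]
    change ‖(x : F)‖ ≤ (c ^ 2)⁻¹ * ‖Δ (x : F)‖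
    rw [inv_mul_eq_div, le_div_iff₀ (by positivity)]
    linarith [hx]
  set M : Submodule ℂ F := LinearMap.range (S : K →ₗ[ℂ] F) with hM
  have hMclosed : IsClosed (M : Set F) := by
    have hms : (M : Set F) = Set.range S := by
      ext x
      simp [hM, LinearMap.mem_range]
    rw [hms]
    exact hanti.isClosed_range S.uniformContinuous
  have hMK : M ≤ K := by
    rintro _ ⟨a, rfl⟩
    show Δ (a : F) ∈ (LinearMap.ker (Δ : F →ₗ[ℂ] F))ᗮ
    rw [Submodule.mem_orthogonal]
    intro k hk
    have hk0 : Δ k = 0 := hk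
    have hz : ⟪Δ (a : F), k⟫ = 0 := by rw [hsa, hk0, inner_zero_right]
    rw [← inner_conj_symm, hz, map_zero]
  haveI : CompleteSpace M := hMclosed.completeSpace_coe
  have hsurj : ∀ φ ∈ K, ∃ a : F, a ∈ K ∧ Δ a = φ := by
    intro φ hφ
    set m : F := (M.orthogonalProjectionOnto φ : F) with hm
    have hmM : m ∈ M := (M.orthogonalProjectionOnto φ).2
    have hm' : φ - m ∈ Mᗮ := Submodule.sub_starProjection_mem_orthogonal (K := M) φ
    have hm'K : φ - m ∈ K := K.sub_mem hφ (hMK hmM)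
    have hΔm' : Δ (φ - m) ∈ M := ⟨⟨φ - m, hm'K⟩, rfl⟩
    have hz : ⟪Δ (φ - m), φ - m⟫ = 0 :=
      (Submodule.mem_orthogonal M _).1 hm' _ hΔm'
    have h0 : Δ (φ - m) = 0 := (hker _).2 (hker0 _ hz)
    have hφm : φ - m = 0 := htriv _ h0 hm'K
    have hφM : φ ∈ M := by rw [sub_eq_zero.mp hφm]; exact hmM
    obtain ⟨a, ha⟩ := hφM
    exact ⟨(a : F), a.2, ha⟩
  -- conclusion
  intro φ hφ
  obtain ⟨α, hαK, hαφ⟩ := hsurj φ hφ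
  refine ⟨α, ⟨hαφ, hαK⟩, ?_⟩
  rintro β ⟨hβφ, hβK⟩
  have h0 : Δ (β - α) = 0 := by rw [map_sub, hβφ, hαφ, sub_self]
  have hK' : β - α ∈ K := K.sub_mem hβK hαK
  exact sub_eq_zero.mp (htriv _ h0 hK')
end
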